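/- Let F be a finite field and let e ≥ d ≥ 2 be integers. Let Γ be the bilinear forms graph on e×d matrices over F. If x is a vertex of Γ and y_1, y_2 are adjacent vertices both at distance j ≥ 2 from x, then there exists a neighbour of x that is at distance j−1 from both y_1 and y_2. -/

import Mathlib

open SimpleGraph

/-- The bilinear forms graph on `e × d` matrices over a field `F`:
two matrices are adjacent iff their difference has rank 1. -/
def bilGraph (F : Type) [Field F] (e d : ℕ) : SimpleGraph (Matrix (Fin e) (Fin d) F) where
  Adj A B := A ≠ B ∧ (A - B).rank = 1
  symm := by
    constructor
    intro A B h
    refine ⟨h.1.symm, ?_⟩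
    have hn : B - A = -(A - B) := by abel
    have hml : (-(A - B)).mulVecLin = -(A - B).mulVecLin := by
      ext v
      simp [Matrix.neg_mulVec]
    have hr : (-(A - B)).rank = (A - B).rank := by
      unfold Matrix.rank
      rw [hml, LinearMap.range_neg]
    rw [hn, hr]
    exact h.2
  loopless := by constructor; intro A h; exact h.1 rfl

/-!
Distance in the bilinear forms graph is the rank of the difference, so for `A = y₁ - x` and
`B = y₂ - x` we need a rank-one `C` lowering both ranks. Write `B - A = u vᵀ`. If `wᵀ A z ≠ 0` for
some `w ⊥ u` and `z ⊥ v`, Wedderburn's rank-one reduction of `A` at `(w, z)` is also that of `B`.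
Otherwise `A` maps `v^⊥` into `span u`, hence `A = u aᵀ + b vᵀ`, and `C = u aᵀ` leaves `b vᵀ` and
`(b + u) vᵀ`, of rank at most one.
-/

namespace Matrix

variable {K m n : Type*} [Field K] [Fintype n]

theorem rank_neg (A : Matrix m n K) : (-A).rank = A.rank := by
  have : (-A).mulVecLin = -A.mulVecLin := LinearMap.map_neg (mulVecBilin K K) A
  rw [rank, rank, this, LinearMap.range_neg]

theorem rank_sub_comm (A B : Matrix m n K) : (A - B).rank = (B - A).rank := by
  rw [← neg_sub, rank_neg]

theorem rank_add_le (A B : Matrix m n K) : (A + B).rank ≤ A.rank + B.rank := by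
  rw [rank, mulVecLin_add]
  exact (Submodule.finrank_mono (LinearMap.range_add_le _ _)).trans
    (Submodule.finrank_add_le_finrank_add_finrank _ _)

theorem rank_le_rank_sub_add (A C : Matrix m n K) : A.rank ≤ (A - C).rank + C.rank := by
  simpa using rank_add_le (A - C) C

theorem eq_zero_of_rank_eq_zero {A : Matrix m n K} (h : A.rank = 0) : A = 0 := by
  rw [rank, Submodule.finrank_eq_zero, LinearMap.range_eq_bot] at h
  exact ext_iff_mulVec.2 fun v => by simpa using LinearMap.congr_fun h v

theorem add_vecMulVec_mulVec (A : Matrix m n K) (u : m → K) {z v : n → K} (hvz : v ⬝ᵥ z = 0) :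
    (A + vecMulVec u v) *ᵥ z = A *ᵥ z := by
  rw [add_mulVec, vecMulVec_mulVec, hvz, MulOpposite.op_zero, zero_smul, add_zero]

variable [Fintype m]

/-- Wedderburn's rank-one reduction term: subtracting it from `A` lowers the rank by one. -/
noncomputable def wedderburn (A : Matrix m n K) (w : m → K) (z : n → K) : Matrix m n K :=
  vecMulVec (A *ᵥ z) ((w ⬝ᵥ A *ᵥ z)⁻¹ • (w ᵥ* A))

theorem rank_wedderburn_le (A : Matrix m n K) (w : m → K) (z : n → K) :
    (wedderburn A w z).rank ≤ 1 :=
  rank_vecMulVec_le _ _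

theorem wedderburn_mulVec (A : Matrix m n K) (w : m → K) (z x : n → K) :
    wedderburn A w z *ᵥ x = ((w ⬝ᵥ A *ᵥ x) / (w ⬝ᵥ A *ᵥ z)) • A *ᵥ z := by
  rw [wedderburn, vecMulVec_mulVec, op_smul_eq_smul, smul_dotProduct, ← dotProduct_mulVec,
    smul_eq_mul, div_eq_inv_mul]

theorem rank_sub_wedderburn_lt {A : Matrix m n K} {w : m → K} {z : n → K}
    (hc : w ⬝ᵥ A *ᵥ z ≠ 0) : (A - wedderburn A w z).rank < A.rank := by
  have hmulVec : ∀ x, (A - wedderburn A w z) *ᵥ x =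
      A *ᵥ (x - ((w ⬝ᵥ A *ᵥ x) / (w ⬝ᵥ A *ᵥ z)) • z) := fun x => by
    rw [sub_mulVec, wedderburn_mulVec, mulVec_sub, mulVec_smul]
  have hw : ∀ x, w ⬝ᵥ (A - wedderburn A w z) *ᵥ x = 0 := fun x => by
    rw [hmulVec, mulVec_sub, mulVec_smul, dotProduct_sub, dotProduct_smul, smul_eq_mul,
      div_mul_cancel₀ _ hc, sub_self]
  refine Submodule.finrank_lt_finrank_of_lt (SetLike.lt_iff_le_and_exists.2
    ⟨?_, A *ᵥ z, LinearMap.mem_range_self A.mulVecLin z, ?_⟩)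
  · rintro _ ⟨x, rfl⟩
    exact ⟨_, (hmulVec x).symm⟩
  · rintro ⟨x, hx⟩
    exact hc (by rw [← hx, mulVecLin_apply, hw])

theorem wedderburn_add_vecMulVec (A : Matrix m n K) {w u : m → K} {z v : n → K}
    (hwu : w ⬝ᵥ u = 0) (hvz : v ⬝ᵥ z = 0) :
    wedderburn (A + vecMulVec u v) w z = wedderburn A w z := by
  have hw : w ᵥ* (A + vecMulVec u v) = w ᵥ* A := by
    rw [vecMul_add, vecMul_vecMulVec, hwu, zero_smul, add_zero]
  rw [wedderburn, wedderburn, add_vecMulVec_mulVec A u hvz, hw]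

theorem exists_rank_sub_vecMulVec_lt {A : Matrix m n K} (hA : A ≠ 0) :
    ∃ u v, (A - vecMulVec u v).rank < A.rank := by
  classical
  obtain ⟨i, k, hik⟩ : ∃ i k, A i k ≠ 0 := by
    by_contra! h
    exact hA (ext h)
  refine ⟨_, _, rank_sub_wedderburn_lt (w := Pi.single i 1) (z := Pi.single k 1) ?_⟩
  simpa [mulVec_single_one, single_dotProduct] using hik

theorem exists_eq_vecMulVec_of_rank_le_one {A : Matrix m n K} (h : A.rank ≤ 1) :
    ∃ u v, A = vecMulVec u v := by
  by_cases hA : A = 0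
  · exact ⟨0, 0, by rw [hA, zero_vecMulVec]⟩
  obtain ⟨u, v, hlt⟩ := exists_rank_sub_vecMulVec_lt hA
  exact ⟨u, v, sub_eq_zero.1 (eq_zero_of_rank_eq_zero (by omega))⟩

theorem exists_ne_zero_eq_vecMulVec_of_rank_eq_one {A : Matrix m n K} (h : A.rank = 1) :
    ∃ u v, u ≠ 0 ∧ v ≠ 0 ∧ A = vecMulVec u v := by
  obtain ⟨u, v, rfl⟩ := exists_eq_vecMulVec_of_rank_le_one h.le
  refine ⟨u, v, ?_, ?_, rfl⟩ <;> rintro rfl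
  · simp at h
  · rw [show vecMulVec u (0 : n → K) = 0 from ext fun _ _ => mul_zero _, rank_zero] at h
    exact zero_ne_one h

theorem exists_dotProduct_eq_one {v : n → K} (hv : v ≠ 0) : ∃ z, v ⬝ᵥ z = 1 := by
  classical
  obtain ⟨k, hk⟩ := Function.ne_iff.1 hv
  exact ⟨(v k)⁻¹ • Pi.single k 1, by
    rw [dotProduct_smul, dotProduct_single, mul_one, smul_eq_mul, inv_mul_cancel₀ hk]⟩

theorem exists_eq_vecMulVec_add_vecMulVec {A : Matrix m n K} {u : m → K} {v : n → K}
    (hu : u ≠ 0) (hv : v ≠ 0) (h : ∀ w z, w ⬝ᵥ u = 0 → v ⬝ᵥ z = 0 → w ⬝ᵥ A *ᵥ z = 0) :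
    ∃ a b, A = vecMulVec u a + vecMulVec b v := by
  classical
  obtain ⟨w₀, hw₀⟩ := exists_dotProduct_eq_one hu
  obtain ⟨z₀, hz₀⟩ := exists_dotProduct_eq_one hv
  -- `(1 - u w₀ᵀ) A (1 - z₀ vᵀ) = 0`, read off entrywise
  refine ⟨w₀ ᵥ* A - (w₀ ⬝ᵥ A *ᵥ z₀) • v, A *ᵥ z₀, ext fun i k => ?_⟩
  have hik := h (Pi.single i 1 - u i • w₀) (Pi.single k 1 - v k • z₀)
    (by simp [sub_dotProduct, dotProduct_comm w₀, hw₀]) (by simp [dotProduct_sub, hz₀])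
  simp only [mulVec_sub, mulVec_smul, dotProduct_sub, sub_dotProduct, dotProduct_smul,
    smul_dotProduct, single_dotProduct, mulVec_single_one, smul_eq_mul, one_mul, col_apply] at hik
  simp only [add_apply, vecMulVec_apply, Pi.sub_apply, Pi.smul_apply, smul_eq_mul]
  have hvecMul : (w₀ ᵥ* A) k = w₀ ⬝ᵥ A.col k := rfl
  linear_combination hik - u i * hvecMul

theorem exists_rank_le_one_rank_sub_lt_rank_sub_lt {A B : Matrix m n K} (hA : 2 ≤ A.rank)
    (hB : 2 ≤ B.rank) (hAB : (B - A).rank = 1) :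
    ∃ C, C.rank ≤ 1 ∧ (A - C).rank < A.rank ∧ (B - C).rank < B.rank := by
  obtain ⟨u, v, hu, hv, huv⟩ := exists_ne_zero_eq_vecMulVec_of_rank_eq_one hAB
  obtain rfl : B = A + vecMulVec u v := by rw [← huv]; abel
  by_cases hpivot : ∃ w z, w ⬝ᵥ u = 0 ∧ v ⬝ᵥ z = 0 ∧ w ⬝ᵥ A *ᵥ z ≠ 0
  · obtain ⟨w, z, hwu, hvz, hc⟩ := hpivot
    have hc' : w ⬝ᵥ (A + vecMulVec u v) *ᵥ z ≠ 0 := by rwa [add_vecMulVec_mulVec A u hvz]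
    refine ⟨wedderburn A w z, rank_wedderburn_le A w z, rank_sub_wedderburn_lt hc, ?_⟩
    simpa only [wedderburn_add_vecMulVec A hwu hvz] using rank_sub_wedderburn_lt hc'
  · push Not at hpivot
    obtain ⟨a, b, rfl⟩ := exists_eq_vecMulVec_add_vecMulVec hu hv hpivot
    refine ⟨vecMulVec u a, rank_vecMulVec_le u a, ?_, ?_⟩
    · rw [add_sub_cancel_left]
      exact (rank_vecMulVec_le b v).trans_lt hA
    · rw [show vecMulVec u a + vecMulVec b v + vecMulVec u v - vecMulVec u a =
        vecMulVec (b + u) v by rw [add_vecMulVec]; abel]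
      exact (rank_vecMulVec_le _ v).trans_lt hB

end Matrix

section BilinearFormsGraph

open Matrix

variable {F : Type} [Field F] {e d : ℕ}

theorem bilGraph_adj_iff {A B : Matrix (Fin e) (Fin d) F} :
    (bilGraph F e d).Adj A B ↔ (A - B).rank = 1 :=
  ⟨And.right, fun h => ⟨by rintro rfl; simp at h, h⟩⟩

theorem rank_sub_le_length_of_walk {A B : Matrix (Fin e) (Fin d) F}
    (p : (bilGraph F e d).Walk A B) : (A - B).rank ≤ p.length := by
  induction p with
  | nil => simp
  | @cons A C B hAC p ih =>
    calc (A - B).rank = ((A - C) + (C - B)).rank := by rw [sub_add_sub_cancel]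
      _ ≤ (A - C).rank + (C - B).rank := rank_add_le _ _
      _ ≤ (p.cons hAC).length := by rw [bilGraph_adj_iff.1 hAC, Walk.length_cons]; omega

theorem exists_walk_length_le_rank_sub (A B : Matrix (Fin e) (Fin d) F) :
    ∃ p : (bilGraph F e d).Walk A B, p.length ≤ (A - B).rank := by
  induction hr : (A - B).rank using Nat.strong_induction_on generalizing A with
  | _ r ih =>
    by_cases hAB : A = B
    · subst hAB
      exact ⟨.nil, Nat.zero_le _⟩
    obtain ⟨u, v, hlt⟩ := exists_rank_sub_vecMulVec_lt (sub_ne_zero.2 hAB)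
    have hC := rank_le_rank_sub_add (A - B) (vecMulVec u v)
    have hadj : (bilGraph F e d).Adj A (A - vecMulVec u v) := by
      rw [bilGraph_adj_iff, sub_sub_cancel]
      have := rank_vecMulVec_le u v
      omega
    rw [sub_right_comm] at hlt hC
    obtain ⟨p, hp⟩ := ih _ (hr ▸ hlt) (A - vecMulVec u v) rfl
    exact ⟨p.cons hadj, by rw [Walk.length_cons]; omega⟩

theorem bilGraph_dist (A B : Matrix (Fin e) (Fin d) F) :
    (bilGraph F e d).dist A B = (A - B).rank := by
  obtain ⟨p, hp⟩ := exists_walk_length_le_rank_sub A B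
  obtain ⟨q, hq⟩ := Reachable.exists_walk_length_eq_dist ⟨p⟩
  exact le_antisymm ((dist_le p).trans hp) (hq ▸ rank_sub_le_length_of_walk q)

end BilinearFormsGraph

theorem bil_common_descent_general (F : Type) [Field F] (e d : ℕ)
    (x y₁ y₂ : Matrix (Fin e) (Fin d) F) (j : ℕ) (hj : 2 ≤ j)
    (hy₁ : (bilGraph F e d).dist x y₁ = j) (hy₂ : (bilGraph F e d).dist x y₂ = j)
    (hadj : (bilGraph F e d).Adj y₁ y₂) :
    ∃ w : Matrix (Fin e) (Fin d) F, (bilGraph F e d).Adj x w ∧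
      (bilGraph F e d).dist y₁ w = j - 1 ∧ (bilGraph F e d).dist y₂ w = j - 1 := by
  rw [bilGraph_dist, Matrix.rank_sub_comm] at hy₁ hy₂
  rw [bilGraph_adj_iff] at hadj
  obtain ⟨C, hC, h₁, h₂⟩ := Matrix.exists_rank_le_one_rank_sub_lt_rank_sub_lt
    (A := y₁ - x) (B := y₂ - x) (by omega) (by omega)
    (by rwa [sub_sub_sub_cancel_right, Matrix.rank_sub_comm])
  have hC₁ := Matrix.rank_le_rank_sub_add (y₁ - x) C
  have hC₂ := Matrix.rank_le_rank_sub_add (y₂ - x) C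
  refine ⟨x + C, ?_, ?_, ?_⟩
  · rw [bilGraph_adj_iff, sub_add_cancel_left, Matrix.rank_neg]
    omega
  · rw [bilGraph_dist, ← sub_sub]
    omega
  · rw [bilGraph_dist, ← sub_sub]
    omega

/-- In the bilinear forms graph on `e × d` matrices over a finite field
(`e ≥ d ≥ 2`), if `y₁, y₂` are adjacent vertices both at distance `j ≥ 2` from `x`, then
some neighbour of `x` is at distance `j - 1` from both `y₁` and `y₂`. -/
theorem bil_common_descent (F : Type) [Field F] [Fintype F]
    (e d : ℕ) (hd : 2 ≤ d) (hde : d ≤ e)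
    (x y₁ y₂ : Matrix (Fin e) (Fin d) F) (j : ℕ) (hj : 2 ≤ j)
    (hy₁ : (bilGraph F e d).dist x y₁ = j) (hy₂ : (bilGraph F e d).dist x y₂ = j)
    (hadj : (bilGraph F e d).Adj y₁ y₂) :
    ∃ w : Matrix (Fin e) (Fin d) F, (bilGraph F e d).Adj x w ∧
      (bilGraph F e d).dist y₁ w = j - 1 ∧ (bilGraph F e d).dist y₂ w = j - 1 :=
  bil_common_descent_general F e d x y₁ y₂ j hj hy₁ hy₂ hadj
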